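/- arXiv:1201.3091 — 5 statements merged into one kernel-verified Lean document; each statement's English description precedes it below -/
import Mathlib

section
/- If a graph G has a vertex cover of size k, then the number of equivalence classes of the 'same type' relation on V(G) is at most 2^k + k. -/
/-!
Two vertices are of the same type iff they agree on all third vertices, so vertices with equal
neighbourhoods have the same type class. Outside a vertex cover `X` a neighbourhood lies inside
`X`, hence the type class of a vertex is determined either by the vertex itself (if it lies in
`X`) or by a subset of `X`: at most `k + 2 ^ k` possibilities.
-/

def sameType {V : Type} (G : SimpleGraph V) (u v : V) : Prop :=
  G.neighborSet u \ {v} = G.neighborSet v \ {u}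

open Function Set

theorem Set.ncard_range_le_of_factorsThrough {α β γ : Type*} {f : α → β} {g : α → γ}
    (h : g.FactorsThrough f) (hf : (range f).Finite) : (range g).ncard ≤ (range f).ncard := by
  rcases isEmpty_or_nonempty α with _ | ⟨⟨a⟩⟩
  · simp [range_eq_empty]
  · rw [← h.extend_comp (fun _ => g a), range_comp]
    exact ncard_image_le hf

section sameType

variable {V : Type} (G : SimpleGraph V)

theorem sameType_iff {u v : V} :
    sameType G u v ↔ ∀ x, x ≠ u → x ≠ v → (G.Adj u x ↔ G.Adj v x) := by
  simp only [sameType, Set.ext_iff, Set.mem_sdiff, SimpleGraph.mem_neighborSet,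
    Set.mem_singleton_iff]
  refine forall_congr' fun x => ?_
  by_cases hxu : x = u <;> by_cases hxv : x = v <;> simp [hxu, hxv]

theorem sameType_congr_right {v w : V} (h : G.neighborSet v = G.neighborSet w) (u : V) :
    sameType G u v ↔ sameType G u w := by
  have hadj : ∀ x, G.Adj v x ↔ G.Adj w x := fun x => Set.ext_iff.mp h x
  simp only [sameType_iff]
  grind [G.loopless, G.adj_comm]

theorem neighborSet_subset_of_isVertexCover {X : Set V} (hX : G.IsVertexCover X) {v : V}
    (hv : v ∉ X) : G.neighborSet v ⊆ X :=
  fun _ hw => (hX hw).resolve_left hv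

theorem neighborSet_eq_of_isVertexCover {X : Set V} (hX : G.IsVertexCover X) {v w : V}
    (hv : v ∉ X) (hw : w ∉ X) (h : X ∩ G.neighborSet v = X ∩ G.neighborSet w) :
    G.neighborSet v = G.neighborSet w := by
  rwa [inter_eq_right.mpr (neighborSet_subset_of_isVertexCover G hX hv),
    inter_eq_right.mpr (neighborSet_subset_of_isVertexCover G hX hw)] at h

end sameType

theorem typeClasses_le_of_vertexCover_general {V : Type} (G : SimpleGraph V)
    (k : ℕ) (X : Finset V) (hcov : ∀ u v, G.Adj u v → u ∈ X ∨ v ∈ X)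
    (hX : X.card = k) :
    {C : Set V | ∃ v, C = {u | sameType G u v}}.ncard ≤ 2 ^ k + k := by
  classical
  have hcover : G.IsVertexCover X := fun u v => hcov u v
  let code : V → Finset V ⊕ V := fun v =>
    if v ∈ X then .inr v else .inl {x ∈ X | G.Adj v x}
  have hcode : ∀ v, code v ∈ X.powerset.disjSum X := by
    intro v
    by_cases hv : v ∈ X <;> simp [code, hv]
  have hfactors : FactorsThrough (fun v => {u | sameType G u v}) code := by
    intro v w hvw
    by_cases hv : v ∈ X <;> by_cases hw : w ∈ X <;>
      simp only [code, hv, hw, if_true, if_false, reduceCtorEq, Sum.inl.injEq, Sum.inr.injEq]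
        at hvw
    · subst hvw; rfl
    · have hN : G.neighborSet v = G.neighborSet w :=
        neighborSet_eq_of_isVertexCover G hcover hv hw <| by
          ext x; simpa using Finset.ext_iff.mp hvw x
      ext u
      exact sameType_congr_right G hN u
  have hrange : range code ⊆ X.powerset.disjSum X := range_subset_iff.mpr hcode
  calc {C : Set V | ∃ v, C = {u | sameType G u v}}.ncard
      = (range fun v => {u | sameType G u v}).ncard := by simp only [range, eq_comm]
    _ ≤ (range code).ncard :=
        ncard_range_le_of_factorsThrough hfactors ((Finset.finite_toSet _).subset hrange)
    _ ≤ (X.powerset.disjSum X).card := by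
        rw [← ncard_coe_finset]
        exact ncard_le_ncard hrange
    _ = 2 ^ k + k := by simp [hX]

/-- If `G` has a vertex cover of size `k`, then the number of equivalence classes of
the 'same type' relation is at most `2^k + k`. -/
theorem typeClasses_le_of_vertexCover {V : Type} [Fintype V] (G : SimpleGraph V)
    (k : ℕ) (X : Finset V) (hcov : ∀ u v, G.Adj u v → u ∈ X ∨ v ∈ X)
    (hX : X.card = k) :
    {C : Set V | ∃ v, C = {u | sameType G u v}}.ncard ≤ 2 ^ k + k :=
  typeClasses_le_of_vertexCover_general G k X hcov hX
end

section
/- Neighborhood diversity and tree-width are incomparable: there exist graphs of neighborhood diversity 1 with arbitrarily large tree-width, and graphs of tree-width 1 with arbitrarily large neighborhood diversity. -/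
/-- `G` has neighborhood diversity at most `w`: the vertices can be partitioned
into at most `w` classes of pairwise same-type vertices. -/
def ndAtMost {V : Type} (G : SimpleGraph V) (w : ℕ) : Prop :=
  ∃ C : V → Fin w, ∀ u v, C u = C v → sameType G u v

/-- A tree decomposition of `G` indexed by `ι`. -/
structure TreeDecomp {V : Type} (G : SimpleGraph V) (ι : Type) where
  T : SimpleGraph ι
  isTree : T.IsTree
  bag : ι → Set V
  covers_vertex : ∀ v : V, ∃ i, v ∈ bag i
  covers_edge : ∀ ⦃u v : V⦄, G.Adj u v → ∃ i, u ∈ bag i ∧ v ∈ bag i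
  bags_connected : ∀ v : V, (T.induce {i | v ∈ bag i}).Connected

/-- `G` has tree-width at most `w`. -/
def twAtMost {V : Type} (G : SimpleGraph V) (w : ℕ) : Prop :=
  ∃ (ι : Type) (d : TreeDecomp G ι), ∀ i, (d.bag i).ncard ≤ w + 1


open SimpleGraph

namespace SimpleGraph

variable {V ι : Type*} {G : SimpleGraph V} {T : SimpleGraph ι}

theorem Walk.IsPath.append {u v w : V} {p : G.Walk u v} {q : G.Walk v w} (hp : p.IsPath)
    (hq : q.IsPath) (hpq : ∀ x ∈ p.support, x ∈ q.support → x = v) : (p.append q).IsPath := by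
  rw [Walk.isPath_def, Walk.support_append]
  have hv : v ∉ q.support.tail := by
    have := hq.support_nodup
    rw [← q.cons_tail_support] at this
    exact (List.nodup_cons.1 this).1
  refine List.Nodup.append hp.support_nodup hq.support_nodup.tail fun x hxp hxq => ?_
  exact hv (hpq x hxp (List.mem_of_mem_tail hxq) ▸ hxq)

theorem Walk.exists_append_first_mem {A : Set V} {u v : V} (p : G.Walk u v) (hv : v ∈ A) :
    ∃ m ∈ A, ∃ (q : G.Walk u m) (r : G.Walk m v),
      p = q.append r ∧ ∀ x ∈ q.support, x ∈ A → x = m := by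
  induction p with
  | nil => exact ⟨_, hv, .nil, .nil, rfl, by simp⟩
  | @cons u w v h p ih =>
    by_cases hu : u ∈ A
    · exact ⟨u, hu, .nil, .cons h p, rfl, by simp⟩
    obtain ⟨m, hm, q, r, rfl, hq⟩ := ih hv
    refine ⟨m, hm, .cons h q, r, rfl, fun x hx hxA => ?_⟩
    rw [Walk.support_cons, List.mem_cons] at hx
    exact hx.elim (fun hxu => absurd (hxu ▸ hxA) hu) (hq x · hxA)

theorem IsAcyclic.support_subset_of_isPath (hT : T.IsAcyclic) {S : Set ι}
    (hS : (T.induce S).Preconnected) {a b : ι} (ha : a ∈ S) (hb : b ∈ S) {p : T.Walk a b}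
    (hp : p.IsPath) : ∀ x ∈ p.support, x ∈ S := by
  classical
  obtain ⟨w⟩ := hS ⟨a, ha⟩ ⟨b, hb⟩
  let w' : T.Walk a b := w.map (Embedding.induce S).toHom
  have hpw : p = w'.bypass :=
    congrArg Subtype.val ((hT.subsingleton_path a b).elim ⟨p, hp⟩ w'.toPath)
  intro x hx
  rw [hpw] at hx
  obtain ⟨y, -, rfl⟩ := List.mem_map.1 (w.support_map _ ▸ w'.support_bypass_subset_support hx)
  exact y.2

theorem IsAcyclic.exists_isPath_support_subset (hT : T.IsAcyclic) {S : Set ι}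
    (hS : (T.induce S).Preconnected) {a b : ι} (ha : a ∈ S) (hb : b ∈ S) :
    ∃ p : T.Walk a b, p.IsPath ∧ ∀ x ∈ p.support, x ∈ S := by
  classical
  obtain ⟨w⟩ := hS ⟨a, ha⟩ ⟨b, hb⟩
  let p := (w.map (Embedding.induce S).toHom).bypass
  have hp : p.IsPath := Walk.bypass_isPath _
  exact ⟨p, hp, hT.support_subset_of_isPath hS ha hb hp⟩

theorem IsAcyclic.induce_inter_preconnected (hT : T.IsAcyclic) {A B : Set ι}
    (hA : (T.induce A).Preconnected) (hB : (T.induce B).Preconnected) :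
    (T.induce (A ∩ B)).Preconnected := by
  rintro ⟨x, hxA, hxB⟩ ⟨y, hyA, hyB⟩
  obtain ⟨p, hp, hpA⟩ := hT.exists_isPath_support_subset hA hxA hyA
  have hpB := hT.support_subset_of_isPath hB hxB hyB hp
  exact ⟨p.induce (A ∩ B) fun z hz => ⟨hpA z hz, hpB z hz⟩⟩

/-- The first vertex `m` of `A` on the path from `y ∈ B ∩ C` to `x ∈ C ∩ A` also lies in `B`:
followed by a path inside `A` from `m` to `z ∈ A ∩ B`, it gives the path from `y` to `z`. -/
theorem IsAcyclic.inter_inter_nonempty (hT : T.IsAcyclic) {A B C : Set ι}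
    (hA : (T.induce A).Preconnected) (hB : (T.induce B).Preconnected)
    (hC : (T.induce C).Preconnected) (hAB : (A ∩ B).Nonempty) (hBC : (B ∩ C).Nonempty)
    (hCA : (C ∩ A).Nonempty) : (A ∩ B ∩ C).Nonempty := by
  obtain ⟨z, hzA, hzB⟩ := hAB
  obtain ⟨y, hyB, hyC⟩ := hBC
  obtain ⟨x, hxC, hxA⟩ := hCA
  obtain ⟨p, hp, hpC⟩ := hT.exists_isPath_support_subset hC hyC hxC
  obtain ⟨m, hmA, q, r, rfl, hqA⟩ := p.exists_append_first_mem hxA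
  obtain ⟨s, hs, hsA⟩ := hT.exists_isPath_support_subset hA hmA hzA
  have hqs : (q.append s).IsPath :=
    hp.of_append_left.append hs fun u hu hus => hqA u hu (hsA u hus)
  have hmB := hT.support_subset_of_isPath hB hyB hzB hqs m
    ((q.mem_support_append_iff s).2 (.inl q.end_mem_support))
  exact ⟨m, ⟨hmA, hmB⟩, hpC m ((q.mem_support_append_iff r).2 (.inl q.end_mem_support))⟩

/-- Helly property of subtrees, strengthened by the subtree `S` that carries the induction. -/
theorem IsAcyclic.exists_mem_of_pairwise_inter_nonempty {β : Type*} (hT : T.IsAcyclic)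
    {A : β → Set ι} {s : Finset β} (hA : ∀ b ∈ s, (T.induce (A b)).Preconnected)
    (hs : ∀ a ∈ s, ∀ b ∈ s, (A a ∩ A b).Nonempty) {S : Set ι} (hS : (T.induce S).Preconnected)
    (hSne : S.Nonempty) (hSA : ∀ b ∈ s, (S ∩ A b).Nonempty) : ∃ i ∈ S, ∀ b ∈ s, i ∈ A b := by
  classical
  induction s using Finset.induction_on generalizing S with
  | empty => exact hSne.imp fun i hi => ⟨hi, by simp⟩
  | insert a s _ ih =>
    simp only [Finset.mem_insert, forall_eq_or_imp] at hA hs hSA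
    obtain ⟨i, ⟨hiS, hia⟩, his⟩ := ih hA.2 (fun b hb c hc => hs.2 b hb |>.2 c hc)
      (hT.induce_inter_preconnected hS hA.1) hSA.1 fun b hb =>
        hT.inter_inter_nonempty hS hA.1 (hA.2 b hb) hSA.1 (hs.1.2 b hb)
          (Set.inter_comm _ _ ▸ hSA.2 b hb)
    exact ⟨i, hiS, by simpa [hia] using his⟩

end SimpleGraph

section TreeDecomp

variable {V ι : Type} {G : SimpleGraph V}

theorem TreeDecomp.exists_bag_superset_of_isClique (d : TreeDecomp G ι) {s : Finset V}
    (hs : G.IsClique (s : Set V)) : ∃ i, (s : Set V) ⊆ d.bag i := by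
  have := d.isTree.connected.nonempty
  have huniv : (d.T.induce Set.univ).Preconnected :=
    (Iso.preconnected_iff (induceUnivIso d.T)).2 d.isTree.connected.preconnected
  obtain ⟨i, -, hi⟩ := d.isTree.isAcyclic.exists_mem_of_pairwise_inter_nonempty
    (A := fun v => {i | v ∈ d.bag i}) (fun v _ => (d.bags_connected v).preconnected)
    (fun u hu v hv => by
      rcases eq_or_ne u v with rfl | huv
      · exact (d.covers_vertex u).imp fun _ hi => ⟨hi, hi⟩
      · exact d.covers_edge (hs hu hv huv))
    huniv Set.univ_nonempty fun v _ => (d.covers_vertex v).imp fun _ hi => ⟨trivial, hi⟩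
  exact ⟨i, hi⟩

theorem not_twAtMost_of_isClique [Finite V] {s : Finset V} (hs : G.IsClique (s : Set V))
    {k : ℕ} (hk : k + 1 < s.card) : ¬ twAtMost G k := by
  rintro ⟨ι, d, hd⟩
  obtain ⟨i, hi⟩ := d.exists_bag_superset_of_isClique hs
  have := (Set.ncard_le_ncard hi).trans (hd i)
  rw [Set.ncard_coe_finset] at this
  omega

/-- The fibres of `f` are disjoint bags, so any tree on `ι` carries them; we take a star. -/
theorem twAtMost_of_fibers (f : V → ι) (r : ι) (hf : ∀ ⦃u v⦄, G.Adj u v → f u = f v) {w : ℕ}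
    (hfib : ∀ i, (f ⁻¹' {i}).ncard ≤ w + 1) : twAtMost G w := by
  refine ⟨ι, ⟨starGraph r, isTree_starGraph r, fun i => f ⁻¹' {i}, fun v => ⟨f v, rfl⟩,
    fun u v huv => ⟨f u, rfl, (hf huv).symm⟩, fun v => ?_⟩, hfib⟩
  have hbags : {i | v ∈ f ⁻¹' {i}} = {f v} := Set.ext fun i => eq_comm
  rw [hbags, induce_singleton_eq_top]
  exact connected_top

end TreeDecomp

theorem ndAtMost_top {V : Type} : ndAtMost (⊤ : SimpleGraph V) 1 := by
  refine ⟨fun _ => 0, fun u v _ => ?_⟩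
  ext w
  simp only [Set.mem_sdiff, mem_neighborSet, top_adj, Set.mem_singleton_iff]
  tauto

theorem not_ndAtMost_of_pairwise_not_sameType {V β : Type} [Fintype β] {G : SimpleGraph V}
    (f : β → V) (hf : Pairwise fun a b => ¬ sameType G (f a) (f b)) {k : ℕ}
    (hk : k < Fintype.card β) : ¬ ndAtMost G k := by
  rintro ⟨C, hC⟩
  obtain ⟨a, b, hab, hCab⟩ := Fintype.exists_ne_map_eq_of_card_lt (C ∘ f) (by simpa using hk)
  exact hf hab (hC _ _ hCab)

theorem Fin.divNat_finProdFinEquiv {m n : ℕ} (x : Fin m × Fin n) :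
    (finProdFinEquiv x).divNat = x.1 :=
  congrArg Prod.fst (finProdFinEquiv.symm_apply_apply x)

/-- `m` disjoint edges: vertex `finProdFinEquiv (i, j)` is the `j`-th end of the `i`-th edge. -/
def matchingGraph (m : ℕ) : SimpleGraph (Fin (m * 2)) :=
  SimpleGraph.fromRel fun u v => u.divNat = v.divNat

theorem matchingGraph_adj {m : ℕ} {u v : Fin (m * 2)} :
    (matchingGraph m).Adj u v ↔ u ≠ v ∧ u.divNat = v.divNat := by
  simp [matchingGraph, eq_comm]

theorem twAtMost_matchingGraph (m : ℕ) : twAtMost (matchingGraph (m + 1)) 1 := by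
  refine twAtMost_of_fibers Fin.divNat 0 (fun u v huv => (matchingGraph_adj.1 huv).2) fun i => ?_
  calc (Fin.divNat ⁻¹' {i}).ncard
      ≤ (Set.univ : Set (Fin 2)).ncard := Set.ncard_le_ncard_of_injOn Fin.modNat
        (fun _ _ => Set.mem_univ _) fun u hu v hv huv =>
          finProdFinEquiv.symm.injective (Prod.ext (hu.trans hv.symm) huv)
    _ = 2 := by simp

theorem not_sameType_matchingGraph {m : ℕ} {a b : Fin m} (hab : a ≠ b) :
    ¬ sameType (matchingGraph m) (finProdFinEquiv (a, 0)) (finProdFinEquiv (b, 0)) := by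
  intro h
  -- the partner `(a, 1)` of `(a, 0)` is not a neighbour of `(b, 0)`
  have hw := congrArg (finProdFinEquiv (a, 1) ∈ ·) h
  simp [matchingGraph_adj, Fin.divNat_finProdFinEquiv, hab.symm] at hw

theorem not_ndAtMost_matchingGraph {m k : ℕ} (hk : k < m) : ¬ ndAtMost (matchingGraph m) k :=
  not_ndAtMost_of_pairwise_not_sameType (fun a : Fin m => finProdFinEquiv (a, 0))
    (fun _ _ hab => not_sameType_matchingGraph hab) (by simpa using hk)

/-- Neighborhood diversity and tree-width are incomparable: there are graphs of
neighborhood diversity 1 and arbitrarily large tree-width, and graphs of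
tree-width 1 and arbitrarily large neighborhood diversity. -/
theorem nd_treewidth_incomparable (k : ℕ) :
    (∃ (n : ℕ) (G : SimpleGraph (Fin n)), ndAtMost G 1 ∧ ¬ twAtMost G k) ∧
    (∃ (n : ℕ) (G : SimpleGraph (Fin n)), twAtMost G 1 ∧ ¬ ndAtMost G k) :=
  ⟨⟨k + 2, ⊤, ndAtMost_top, not_twAtMost_of_isClique (s := Finset.univ) (by simp) (by simp)⟩,
    ⟨(k + 1) * 2, matchingGraph (k + 1), twAtMost_matchingGraph k,
      not_ndAtMost_matchingGraph k.lt_succ_self⟩⟩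
end

section
/- In any instance of the Vertex-Disjoint Paths problem, if a solution exists then there exists a simple solution, i.e., one in which each path contains at most one non-endpoint vertex from every type class. -/
open SimpleGraph

variable {V : Type} {G : SimpleGraph V}

theorem sameType.symm {u v : V} (h : sameType G u v) : sameType G v u :=
  Eq.symm h

theorem sameType.adj_of_adj {u v b : V} (h : sameType G u v) (hvb : G.Adj v b) (hbu : b ≠ u) :
    G.Adj u b := by
  have hb : b ∈ G.neighborSet v \ {u} := ⟨hvb, hbu⟩
  rw [← h] at hb
  exact hb.1

variable [DecidableEq V]

theorem exists_shorter_walk_of_sameType_start {u v t : V} (r : G.Walk u t) (hv : v ∈ r.support)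
    (hvu : v ≠ u) (hvt : v ≠ t) (htype : sameType G u v) :
    ∃ w : G.Walk u t, w.length < r.length ∧ w.support ⊆ r.support := by
  obtain ⟨b, hvb, rest, hdrop⟩ :=
    Walk.not_nil_iff.mp (Walk.not_nil_of_ne (p := r.dropUntil v hv) hvt)
  have htake : 0 < (r.takeUntil v hv).length :=
    Nat.pos_of_ne_zero fun h0 => hvu (Walk.eq_of_length_eq_zero h0).symm
  have hlen : (r.takeUntil v hv).length + (rest.length + 1) = r.length := by
    rw [← Walk.length_cons hvb rest, ← hdrop, ← Walk.length_append, Walk.take_spec]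
  have hrest : rest.support ⊆ r.support := fun x hx => by
    have : x ∈ (r.dropUntil v hv).support := by rw [hdrop]; exact List.mem_cons_of_mem _ hx
    exact r.support_dropUntil_subset_support hv this
  by_cases hbu : b = u
  · subst hbu
    exact ⟨rest, by omega, hrest⟩
  · refine ⟨Walk.cons (htype.adj_of_adj hvb hbu) rest, ?_, ?_⟩
    · simp only [Walk.length_cons]; omega
    · rw [Walk.support_cons]
      exact List.cons_subset.mpr ⟨r.start_mem_support, hrest⟩

theorem exists_shorter_walk_of_sameType {a t u v : V} (q : G.Walk a t) (hu : u ∈ q.support)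
    (hv : v ∈ q.support) (huv : u ≠ v) (hut : u ≠ t) (hvt : v ≠ t) (htype : sameType G u v) :
    ∃ w : G.Walk a t, w.length < q.length ∧ w.support ⊆ q.support := by
  induction q with
  | nil => exact absurd ((List.mem_singleton.mp hu).trans (List.mem_singleton.mp hv).symm) huv
  | @cons a c _ hac q ih =>
    rw [Walk.support_cons, List.mem_cons] at hu hv
    rcases hu with rfl | hu
    · exact exists_shorter_walk_of_sameType_start _ (by simp [hv]) (Ne.symm huv) hvt htype
    rcases hv with rfl | hv
    · exact exists_shorter_walk_of_sameType_start _ (by simp [hu]) huv hut htype.symm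
    obtain ⟨w, hlen, hsub⟩ := ih hu hv hut hvt
    refine ⟨Walk.cons hac w, Nat.succ_lt_succ hlen, ?_⟩
    simpa only [Walk.support_cons] using List.cons_subset_cons a hsub

theorem exists_isPath_sameType_eq_of_walk {a b : V} (p : G.Walk a b) :
    ∃ q : G.Walk a b, q.IsPath ∧ q.support ⊆ p.support ∧
      ∀ u ∈ q.support, ∀ v ∈ q.support, u ≠ b → v ≠ b → sameType G u v → u = v := by
  induction hn : p.length using Nat.strong_induction_on generalizing p with
  | _ n ih =>
    by_cases hbad : ∃ u ∈ p.support, ∃ v ∈ p.support,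
        u ≠ v ∧ u ≠ b ∧ v ≠ b ∧ sameType G u v
    · obtain ⟨u, hu, v, hv, huv, hub, hvb, htype⟩ := hbad
      obtain ⟨w, hlen, hsub⟩ := exists_shorter_walk_of_sameType p hu hv huv hub hvb htype
      obtain ⟨q, hq, hqsub, hqtype⟩ := ih _ (hn ▸ hlen) w rfl
      exact ⟨q, hq, List.Subset.trans hqsub hsub, hqtype⟩
    · have hsub := p.support_bypass_subset_support
      refine ⟨p.bypass, p.bypass_isPath, hsub, fun u hu v hv hub hvb htype => ?_⟩
      by_contra huv
      exact hbad ⟨u, hsub hu, v, hsub hv, huv, hub, hvb, htype⟩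

theorem disjointPaths_simple_solution_general {V : Type} (G : SimpleGraph V)
    {ι : Type} (s t : ι → V)
    (h : ∃ p : ∀ i, G.Walk (s i) (t i),
      (∀ i, (p i).IsPath) ∧
      (∀ i j, i ≠ j → List.Disjoint (p i).support (p j).support)) :
    ∃ p : ∀ i, G.Walk (s i) (t i),
      (∀ i, (p i).IsPath) ∧
      (∀ i j, i ≠ j → List.Disjoint (p i).support (p j).support) ∧
      (∀ i, ∀ u ∈ (p i).support, ∀ v ∈ (p i).support,
        u ≠ s i → u ≠ t i → v ≠ s i → v ≠ t i → sameType G u v → u = v) := by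
  classical
  obtain ⟨p, -, hdisj⟩ := h
  choose q hpath hsub htype using fun i => exists_isPath_sameType_eq_of_walk (p i)
  refine ⟨q, hpath, fun i j hij => ?_, fun i u hu v hv _ hut _ hvt => htype i u hu v hv hut hvt⟩
  exact List.disjoint_of_subset_left (hsub i) <|
    List.disjoint_of_subset_right (hsub j) (hdisj i j hij)

/-- If a Vertex-Disjoint Paths instance admits a solution, then it admits a
simple solution: one in which every path contains at most one non-endpoint
vertex from each type class. -/
theorem disjointPaths_simple_solution {V : Type} [Fintype V] (G : SimpleGraph V)
    {ι : Type} [Fintype ι] (s t : ι → V)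
    (h : ∃ p : ∀ i, G.Walk (s i) (t i),
      (∀ i, (p i).IsPath) ∧
      (∀ i j, i ≠ j → List.Disjoint (p i).support (p j).support)) :
    ∃ p : ∀ i, G.Walk (s i) (t i),
      (∀ i, (p i).IsPath) ∧
      (∀ i j, i ≠ j → List.Disjoint (p i).support (p j).support) ∧
      (∀ i, ∀ u ∈ (p i).support, ∀ v ∈ (p i).support,
        u ≠ s i → u ≠ t i → v ≠ s i → v ≠ t i → sameType G u v → u = v) :=
  disjointPaths_simple_solution_general G s t h
end

section
/- Let p be a path in a graph G containing two vertices x and y of the same type with x appearing before y, and let z be the vertex following y on p (if it exists). Then there is a path from the start of p to the end of p whose vertex set is a subset of V(p) omitting all internal vertices strictly between x and z, obtained by rerouting directly from x to z (using that y adjacent to z and x, y having the same type implies x is adjacent to z). -/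
theorem sameType.adj_of_adj_s10 {V : Type} {G : SimpleGraph V} {x y z : V} (hxy : sameType G x y)
    (hyz : G.Adj y z) (hzx : z ≠ x) : G.Adj x z := by
  have hz : z ∈ G.neighborSet y \ {x} := ⟨hyz, hzx⟩
  rw [← hxy] at hz
  exact hz.1

namespace SimpleGraph.Walk

variable {V : Type*} {G : SimpleGraph V}

theorem exists_walks_of_support_eq_append {a b u : V} :
    ∀ (p : G.Walk a b) {l₁ l₂ : List V}, p.support = l₁ ++ u :: l₂ →
      ∃ (p₁ : G.Walk a u) (p₂ : G.Walk u b), p₁.support = l₁ ++ [u] ∧ p₂.support = u :: l₂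
  | nil, [], _, h => by
    obtain ⟨rfl, rfl⟩ : a = u ∧ [] = _ := by simpa using h
    exact ⟨nil, nil, rfl, rfl⟩
  | nil, _ :: l₁, _, h => by simp at h
  | cons hadj q, [], _, h => by
    obtain ⟨rfl, hq⟩ := List.cons_eq_cons.mp h
    exact ⟨nil, cons hadj q, rfl, by rw [support_cons, hq]⟩
  | cons hadj q, c :: l₁, _, h => by
    obtain ⟨rfl, hq⟩ := List.cons_eq_cons.mp h
    obtain ⟨q₁, q₂, hq₁, hq₂⟩ := exists_walks_of_support_eq_append q hq
    exact ⟨cons hadj q₁, q₂, by simp [hq₁], hq₂⟩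

theorem IsPath.exists_isPath_support_eq_of_adj {a b u v : V} {p : G.Walk a b} (hp : p.IsPath)
    {l₁ m l₃ : List V} (hsup : p.support = l₁ ++ u :: m ++ v :: l₃) (huv : G.Adj u v) :
    ∃ q : G.Walk a b, q.IsPath ∧ q.support = l₁ ++ u :: v :: l₃ := by
  obtain ⟨p₁, -, hp₁, -⟩ := exists_walks_of_support_eq_append p (u := u) (l₁ := l₁)
    (by simpa using hsup)
  obtain ⟨-, p₃, -, hp₃⟩ := exists_walks_of_support_eq_append p hsup
  have hq : (p₁.append (cons huv p₃)).support = l₁ ++ u :: v :: l₃ := by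
    simp [support_append, hp₁, hp₃]
  refine ⟨_, isPath_def _ |>.mpr ?_, hq⟩
  have hsub : (l₁ ++ u :: v :: l₃).Sublist p.support := by
    simp [hsup, (List.sublist_append_right m (v :: l₃)).cons_cons u |>.append_left l₁]
  rw [hq]
  exact hsub.nodup hp.support_nodup

end SimpleGraph.Walk

theorem path_reroute_general {V : Type} (G : SimpleGraph V) {a b : V}
    (p : G.Walk a b) (hp : p.IsPath) (x y z : V) (l₁ l₂ l₃ : List V)
    (hsup : p.support = l₁ ++ x :: l₂ ++ y :: z :: l₃)
    (hxy : sameType G x y) :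
    ∃ q : G.Walk a b, q.IsPath ∧ q.support ⊆ l₁ ++ x :: z :: l₃ := by
  have hyz : G.Adj y z := p.adj_of_infix_support ⟨l₁ ++ x :: l₂, l₃, by simp [hsup]⟩
  have hzx : z ≠ x := by
    have hnd := hsup ▸ hp.support_nodup
    simp only [List.append_assoc, List.cons_append, List.nodup_append, List.nodup_cons,
      List.mem_append, List.mem_cons] at hnd
    rintro rfl
    exact hnd.2.1.1 (Or.inr (Or.inr (Or.inl rfl)))
  obtain ⟨q, hq, hqsup⟩ := hp.exists_isPath_support_eq_of_adj (m := l₂ ++ [y])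
    (by simpa using hsup) (hxy.adj_of_adj_s10 hyz hzx)
  exact ⟨q, hq, hqsup ▸ List.Subset.refl _⟩

/-- Rerouting: if a path `p` from `a` to `b` contains two same-type vertices
`x` (earlier) and `y` (later), and `z` follows `y` on `p`, then there is a path
from `a` to `b` whose vertices form a subset of those of `p` omitting all
internal vertices strictly between `x` and `z`. -/
theorem path_reroute {V : Type} [Fintype V] (G : SimpleGraph V) {a b : V}
    (p : G.Walk a b) (hp : p.IsPath) (x y z : V) (l₁ l₂ l₃ : List V)
    (hsup : p.support = l₁ ++ x :: l₂ ++ y :: z :: l₃)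
    (hxy : sameType G x y) :
    ∃ q : G.Walk a b, q.IsPath ∧ q.support ⊆ l₁ ++ x :: z :: l₃ :=
  path_reroute_general G p hp x y z l₁ l₂ l₃ hsup hxy
end

section
/- Let G be a vertex-colored graph (coloring not necessarily proper), let B be a connected subgraph of G whose vertices induce the set B' of type classes in the type graph, and let v be a vertex of G whose type class belongs to B' with v ∉ V(B) and |V(B)| ≥ 2. Then v is adjacent to some vertex of B, and hence the subgraph induced by V(B) ∪ {v} is connected. -/
def typeClass {V : Type} (G : SimpleGraph V) (v : V) : Set V :=
  {u | sameType G u v}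

namespace SimpleGraph

variable {V : Type} {G : SimpleGraph V}

lemma Preconnected.exists_adj_of_one_lt_ncard {s : Set V} (hs : (G.induce s).Preconnected)
    (hcard : 1 < s.ncard) {u : V} (hu : u ∈ s) : ∃ w ∈ s, G.Adj u w := by
  have : Nontrivial s := (Set.one_lt_ncard_iff_nontrivial_and_finite.mp hcard).1.coe_sort
  obtain ⟨w, huw⟩ := hs.exists_adj_of_nontrivial ⟨u, hu⟩
  exact ⟨w, w.2, huw⟩

lemma connected_induce_insert_of_adj {s : Set V} (hs : (G.induce s).Preconnected)
    {v w : V} (hw : w ∈ s) (hvw : G.Adj v w) : (G.induce (insert v s)).Connected := by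
  rw [← Set.singleton_union]
  exact connected_induce_union Preconnected.of_subsingleton hs rfl hw hvw

end SimpleGraph

lemma sameType.adj_of_adj_s13 {V : Type} {G : SimpleGraph V} {u v w : V} (h : sameType G u v)
    (huw : G.Adj u w) (hwv : w ≠ v) : G.Adj v w := by
  have : w ∈ G.neighborSet u \ {v} := ⟨huw, hwv⟩
  rw [h] at this
  exact this.1

theorem extend_connected_by_typeClass_general {V : Type} (G : SimpleGraph V)
    (B : Set V) (hB : (G.induce B).Connected) (hcard : 2 ≤ B.ncard)
    (v : V) (hv : v ∉ B) (hmeet : (typeClass G v ∩ B).Nonempty) :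
    (∃ w ∈ B, G.Adj v w) ∧ (G.induce (insert v B)).Connected := by
  obtain ⟨u, huv, huB⟩ := hmeet
  obtain ⟨w, hwB, huw⟩ := hB.preconnected.exists_adj_of_one_lt_ncard hcard huB
  have hvw : G.Adj v w := sameType.adj_of_adj_s13 huv huw (ne_of_mem_of_not_mem hwB hv)
  exact ⟨⟨w, hwB, hvw⟩, SimpleGraph.connected_induce_insert_of_adj hB.preconnected hwB hvw⟩

/-- If `B` induces a connected subgraph with at least two vertices, `v ∉ B`,
and the type class of `v` meets `B`, then `v` has a neighbor in `B`; hence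
`B ∪ {v}` induces a connected subgraph. -/
theorem extend_connected_by_typeClass {V : Type} [Fintype V] (G : SimpleGraph V)
    (B : Set V) (hB : (G.induce B).Connected) (hcard : 2 ≤ B.ncard)
    (v : V) (hv : v ∉ B) (hmeet : (typeClass G v ∩ B).Nonempty) :
    (∃ w ∈ B, G.Adj v w) ∧ (G.induce (insert v B)).Connected :=
  extend_connected_by_typeClass_general G B hB hcard v hv hmeet
end
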